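/- Discrete total energy conservation for the Vlasov-Ampère scheme: if E_i^{n+1} = E_i^n + Δt (ρu)_i^n and (E_Kin)_i^{n+1} = (E_Kin)_i^n − Δt·D_i − Δt·((E_i^n + E_i^{n+1})/2)·(ρu)_i^n, where Σ_i D_i = 0 (conservative flux discretization), then Σ_i [(E_Kin)_i^{n+1} + (1/2)(E_i^{n+1})²] = Σ_i [(E_Kin)_i^n + (1/2)(E_i^n)²]. -/
import Mathlib


open Finset

/-- Discrete total energy conservation for the Vlasov-Ampère scheme: if
`E_i^{n+1} = E_i^n + Δt (ρu)_i^n` and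
`(E_Kin)_i^{n+1} = (E_Kin)_i^n − Δt D_i − Δt ((E_i^n + E_i^{n+1})/2)(ρu)_i^n`
with `Σ_i D_i = 0`, then the discrete total energy is conserved. -/
theorem discrete_total_energy_conservation {ι : Type*} [Fintype ι] (Δt : ℝ)
    (hΔt : 0 < Δt) (En En1 EKin EKin1 ρu D : ι → ℝ)
    (hD : ∑ i, D i = 0)
    (hE : ∀ i, En1 i = En i + Δt * ρu i)
    (hK : ∀ i, EKin1 i = EKin i - Δt * D i - Δt * ((En i + En1 i) / 2) * ρu i) :
    ∑ i, (EKin1 i + (1 / 2) * (En1 i) ^ 2)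
      = ∑ i, (EKin i + (1 / 2) * (En i) ^ 2) := by
  have h : ∀ i, EKin1 i + (1 / 2) * (En1 i) ^ 2
      = (EKin i + (1 / 2) * (En i) ^ 2) - Δt * D i := by
    intro i
    rw [hK i, hE i]
    ring
  simp only [h, Finset.sum_sub_distrib, ← Finset.mul_sum, hD, mul_zero, sub_zero]
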